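/- arXiv:2509.17612 — 2 statements merged into one kernel-verified Lean document; each statement's English description precedes it below -/
import Mathlib

section
/- Let F = (X,(R_◇)_{◇∈A},𝓟) be a general frame, i.e., 𝓟 is a collection of subsets of X containing ∅, closed under union, intersection, complement, and under each operation V ↦ R_◇⁻¹[V]. Then the modal algebra (𝓟, ∪, ∩, complement, (V ↦ R_◇⁻¹[V])_{◇∈A}) is locally finite (every finitely generated subalgebra is finite) if and only if F is tunable: for every finite partition 𝓥 of X with 𝓥 ⊆ 𝓟, there exists a finite refinement of 𝓥 that is tuned in the Kripke frame (X,(R_◇)_{◇∈A}). -/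
set_option maxHeartbeats 1000000

/-- Modal formulas over an alphabet `A` of diamonds, with variables `pₙ`,
falsum and implication as primitive Boolean connectives. -/
inductive MF (A : Type) : Type
  | var : ℕ → MF A
  | bot : MF A
  | imp : MF A → MF A → MF A
  | dia : A → MF A → MF A

namespace MF

variable {A : Type}

def neg (φ : MF A) : MF A := .imp φ .bot
def top : MF A := neg .bot
def or (φ ψ : MF A) : MF A := .imp (neg φ) ψ
def and (φ ψ : MF A) : MF A := neg (.imp φ (neg ψ))
def box (a : A) (φ : MF A) : MF A := neg (.dia a (neg φ))
def iff (φ ψ : MF A) : MF A := and (.imp φ ψ) (.imp ψ φ)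

def bigOr : List (MF A) → MF A
  | [] => .bot
  | φ :: r => or φ (bigOr r)

def bigAnd : List (MF A) → MF A
  | [] => top
  | φ :: r => and φ (bigAnd r)

def subst (σ : ℕ → MF A) : MF A → MF A
  | .var n => σ n
  | .bot => .bot
  | .imp φ ψ => .imp (subst σ φ) (subst σ ψ)
  | .dia a φ => .dia a (subst σ φ)

/-- `φ` is a `k`-formula: all its variables are among `p₀,…,p_{k-1}`. -/
def varsBelow (k : ℕ) : MF A → Prop
  | .var n => n < k
  | .bot => True
  | .imp φ ψ => varsBelow k φ ∧ varsBelow k ψ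
  | .dia _ φ => varsBelow k φ

/-- Modal depth: maximal number of nested modalities. -/
def depth : MF A → ℕ
  | .var _ => 0
  | .bot => 0
  | .imp φ ψ => max (depth φ) (depth ψ)
  | .dia _ φ => depth φ + 1

end MF

/-- Truth in a Kripke model `(X, R, θ)` at a point. -/
def satM {A X : Type} (R : A → X → X → Prop) (θ : ℕ → Set X) : X → MF A → Prop
  | w, MF.var n => w ∈ θ n
  | _, MF.bot => False
  | w, MF.imp φ ψ => satM R θ w φ → satM R θ w ψ
  | w, MF.dia a φ => ∃ v, R a w v ∧ satM R θ v φ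

/-- Validity in a Kripke frame. -/
def validM {A X : Type} (R : A → X → X → Prop) (φ : MF A) : Prop :=
  ∀ θ w, satM R θ w φ

/-- `φ` is a substitution instance of a classical propositional tautology
(equivalently: true under every Boolean valuation treating variables and
diamond formulas as atoms). -/
def IsTautInstance {A : Type} (φ : MF A) : Prop :=
  ∀ f : MF A → Prop, ¬ f .bot → (∀ ψ χ, f (.imp ψ χ) ↔ (f ψ → f χ)) → f φ

/-- `L` is a normal modal logic over `A`. -/
structure IsNormalLogic {A : Type} (L : Set (MF A)) : Prop where
  taut : ∀ φ : MF A, IsTautInstance φ → φ ∈ L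
  dia_bot : ∀ a : A, (MF.dia a MF.bot).neg ∈ L
  dia_or : ∀ a : A,
    MF.imp (.dia a (MF.or (.var 0) (.var 1))) (MF.or (.dia a (.var 0)) (.dia a (.var 1))) ∈ L
  mp : ∀ {φ ψ : MF A}, MF.imp φ ψ ∈ L → φ ∈ L → ψ ∈ L
  subst_mem : ∀ {φ : MF A} (σ : ℕ → MF A), φ ∈ L → φ.subst σ ∈ L
  mono : ∀ (a : A) {φ ψ : MF A}, MF.imp φ ψ ∈ L → MF.imp (.dia a φ) (.dia a ψ) ∈ L

/-- `L` is `k`-finite: there are finitely many `k`-formulas up to `L`-equivalence. -/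
def kFinite {A : Type} (L : Set (MF A)) (k : ℕ) : Prop :=
  ∃ S : Finset (MF A), ∀ φ : MF A, φ.varsBelow k → ∃ ψ ∈ S, MF.iff φ ψ ∈ L

def LocallyTabular {A : Type} (L : Set (MF A)) : Prop := ∀ k : ℕ, kFinite L k

/-- `◇_S φ`, the disjunction of `◇φ` over `◇ ∈ S`. -/
noncomputable def diaS {A : Type} (S : Finset A) (φ : MF A) : MF A :=
  MF.bigOr (S.toList.map (fun a => MF.dia a φ))

/-- `(◇_S)^n φ`. -/
noncomputable def diaSpow {A : Type} (S : Finset A) : ℕ → MF A → MF A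
  | 0, φ => φ
  | n + 1, φ => diaS S (diaSpow S n φ)

/-- `◇_S^{≤ m} φ = ⋁_{i ≤ m} (◇_S)^i φ`. -/
noncomputable def diaSle {A : Type} (S : Finset A) (m : ℕ) (φ : MF A) : MF A :=
  MF.bigOr ((List.range (m + 1)).map (fun i => diaSpow S i φ))

/-- `□* φ = ¬◇_S^{≤ m}¬φ`. -/
noncomputable def boxSle {A : Type} (S : Finset A) (m : ℕ) (φ : MF A) : MF A :=
  MF.neg (diaSle S m (MF.neg φ))

/-- The pretransitivity formula `atr_S(m) = (◇_S)^{m+1} p₀ → ◇_S^{≤m} p₀`. -/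
noncomputable def atrS {A : Type} (S : Finset A) (m : ℕ) : MF A :=
  MF.imp (diaSpow S (m + 1) (.var 0)) (diaSle S m (.var 0))

/-- The finite-height formulas `B_h^{≤m}` over the compound modality `◇_S^{≤m}`:
`B₀ = ⊥`, `B_h = p_h → □*(◇* p_h ∨ B_{h-1})`. -/
noncomputable def BstarS {A : Type} (S : Finset A) (m : ℕ) : ℕ → MF A
  | 0 => .bot
  | h + 1 => MF.imp (.var (h + 1))
      (boxSle S m (MF.or (diaSle S m (.var (h + 1))) (BstarS S m h)))

/-- Unimodal finite-height formulas: `B₀ = ⊥`, `B_h = p_h → □(◇ p_h ∨ B_{h-1})`. -/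
def BformU : ℕ → MF Unit
  | 0 => .bot
  | h + 1 => MF.imp (.var (h + 1))
      (MF.box () (MF.or (MF.dia () (.var (h + 1))) (BformU h)))

/-- `p_i ∧ ◇_S (p_{i+1} ∧ ◇_S ( … ∧ ◇_S p_{i+n}) … )`. -/
noncomputable def chainS {A : Type} (S : Finset A) : ℕ → ℕ → MF A
  | i, 0 => .var i
  | i, n + 1 => MF.and (.var i) (diaS S (chainS S (i + 1) n))

/-- The list of pairs `(i, j)` with `i < j ≤ n`. -/
def pairsLT (n : ℕ) : List (ℕ × ℕ) :=
  (List.range (n + 1)).flatMap (fun j => (List.range j).map (fun i => (i, j)))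

/-- The reducible-path formula `R_m(◇_S)`. -/
noncomputable def RmS {A : Type} (S : Finset A) (m : ℕ) : MF A :=
  MF.imp (chainS S 0 (m + 1))
    (MF.or
      (MF.bigOr ((pairsLT (m + 1)).map
        (fun p => diaSpow S p.1 (MF.and (.var p.1) (.var p.2)))))
      (MF.bigOr ((pairsLT m).map
        (fun p => diaSpow S p.1 (MF.and (.var p.1) (diaS S (.var (p.2 + 1))))))))

/-- `n`-fold relational composition: `R⁰ = Id`, `R^{n+1} = R ∘ Rⁿ`. -/
def relPow {X : Type} (R : X → X → Prop) : ℕ → X → X → Prop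
  | 0 => fun a b => a = b
  | n + 1 => fun a c => ∃ b, R a b ∧ relPow R n b c

/-- Reflexive transitive closure `R* = ⋃ₙ Rⁿ`. -/
def relStar {X : Type} (R : X → X → Prop) (a b : X) : Prop := ∃ n, relPow R n a b

/-- `R` is `m`-transitive: `R^{m+1} ⊆ R^{≤ m}`. -/
def mTransitive {X : Type} (R : X → X → Prop) (m : ℕ) : Prop :=
  ∀ a b, relPow R (m + 1) a b → ∃ i ≤ m, relPow R i a b

/-- The union `R_F = ⋃_{◇ ∈ A} R_◇`. -/
def unionRel {A X : Type} (R : A → X → X → Prop) : X → X → Prop :=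
  fun a b => ∃ i, R i a b

/-- `R⁻¹[V] = {x ∣ ∃ y ∈ V, x R y}`. -/
def diaPre {X : Type} (R : X → X → Prop) (V : Set X) : Set X := {x | ∃ y ∈ V, R x y}

/-- The height of `(X, R)` is at most `h`: there is no strictly ascending
(h+1)-chain with respect to `R*`. -/
def heightLE {X : Type} (R : X → X → Prop) (h : ℕ) : Prop :=
  ¬ ∃ x : ℕ → X, ∀ i < h, relStar R (x i) (x (i + 1)) ∧ ¬ relStar R (x (i + 1)) (x i)

/-- A partition is `R`-tuned. -/
def RTuned {X : Type} (R : X → X → Prop) (𝒰 : Set (Set X)) : Prop :=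
  ∀ U ∈ 𝒰, ∀ V ∈ 𝒰, (∃ a ∈ U, ∃ b ∈ V, R a b) → ∀ a ∈ U, ∃ b ∈ V, R a b

/-- A partition is tuned in the frame `(X, (R_◇)_{◇ ∈ A})`. -/
def TunedIn {A X : Type} (R : A → X → X → Prop) (𝒰 : Set (Set X)) : Prop :=
  ∀ a : A, RTuned (R a) 𝒰

/-- `𝒰` refines `𝒱`: every block of `𝒰` is included in a block of `𝒱`. -/
def Refines {X : Type} (𝒰 𝒱 : Set (Set X)) : Prop := ∀ U ∈ 𝒰, ∃ V ∈ 𝒱, U ⊆ V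

/-- The equivalence `≡_𝒱` induced by a family of sets. -/
def famEq {X : Type} (𝒱 : Set (Set X)) (a b : X) : Prop := ∀ V ∈ 𝒱, (a ∈ V ↔ b ∈ V)

/-- The set of equivalence classes of a relation. -/
def eqClasses {X : Type} (E : X → X → Prop) : Set (Set X) := {C | ∃ x, C = {y | E x y}}

/-- Tunedness condition for abstract normal operators `g_◇` on the powerset. -/
def gTuned {A X : Type} (g : A → Set X → Set X) (𝒰 : Set (Set X)) : Prop :=
  ∀ a : A, ∀ U ∈ 𝒰, ∀ V ∈ 𝒰, (V ∩ g a U).Nonempty → V ⊆ g a U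

/-- `C` is a subalgebra of the modal algebra `(𝒫(X), ∪, ∩, ᶜ, (g_◇))`. -/
def IsSubalg {A X : Type} (g : A → Set X → Set X) (C : Set (Set X)) : Prop :=
  ∅ ∈ C ∧ Set.univ ∈ C ∧ (∀ U ∈ C, ∀ V ∈ C, U ∪ V ∈ C) ∧
    (∀ U ∈ C, ∀ V ∈ C, U ∩ V ∈ C) ∧ (∀ U ∈ C, Uᶜ ∈ C) ∧ (∀ U ∈ C, ∀ a : A, g a U ∈ C)

/-- The subalgebra generated by `𝒬`. -/
def genAlg {A X : Type} (g : A → Set X → Set X) (𝒬 : Set (Set X)) : Set (Set X) :=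
  ⋂₀ {C | IsSubalg g C ∧ 𝒬 ⊆ C}

/-- Points of a model indistinguishable by `k`-formulas of depth at most `d`. -/
def modEq {A X : Type} (R : A → X → X → Prop) (θ : ℕ → Set X) (k d : ℕ) (a b : X) : Prop :=
  ∀ φ : MF A, φ.varsBelow k → φ.depth ≤ d → (satM R θ a φ ↔ satM R θ b φ)

/-- Points of a model indistinguishable by all `k`-formulas. -/
def modEqAll {A X : Type} (R : A → X → X → Prop) (θ : ℕ → Set X) (k : ℕ) (a b : X) : Prop :=
  ∀ φ : MF A, φ.varsBelow k → (satM R θ a φ ↔ satM R θ b φ)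

/-- The modal depth of the `k`-model `(X, R, θ)` is at most `d`. -/
def mdModelLE {A X : Type} (R : A → X → X → Prop) (θ : ℕ → Set X) (k d : ℕ) : Prop :=
  ∀ e : ℕ, modEq R θ k e ≠ modEq R θ k (e + 1) → e ≤ d

/-- Bundled Kripke frames over the alphabet `A`. -/
structure KFrame (A : Type) : Type 1 where
  W : Type
  R : A → W → W → Prop

/-- The logic of a class of Kripke frames. -/
def LogC {A : Type} (𝓕 : Set (KFrame A)) : Set (MF A) :=
  {φ | ∀ F ∈ 𝓕, validM F.R φ}

/-- `Y` is an upset of the frame: `R_◇[Y] ⊆ Y` for every `◇`. -/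
def UpsetIn {A X : Type} (R : A → X → X → Prop) (Y : Set X) : Prop :=
  ∀ a : A, ∀ y ∈ Y, ∀ z, R a y z → z ∈ Y

/-- The relations of a frame restricted to a subset. -/
def restrR {A X : Type} (R : A → X → X → Prop) (Y : Set X) : A → Y → Y → Prop :=
  fun a u v => R a u.val v.val

/-- A valuation restricted to a subset. -/
def restrV {X : Type} (θ : ℕ → Set X) (Y : Set X) : ℕ → Set Y :=
  fun n => {u | u.val ∈ θ n}

/-- The restriction `F ↾ Y` of a frame to a subset of its domain. -/
def KFrame.restrict {A : Type} (F : KFrame A) (Y : Set F.W) : KFrame A :=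
  ⟨Y, restrR F.R Y⟩

/-- The induced partitions `𝒱_d`: `𝒱₀ = X/≡_𝒱` and `𝒱_{d+1}` is the quotient by
the family `𝒱_d ∪ {R_◇⁻¹[V] : ◇ ∈ A, V ∈ 𝒱_d}`. -/
def stageClasses {A X : Type} (R : A → X → X → Prop) (𝒱 : Set (Set X)) : ℕ → Set (Set X)
  | 0 => eqClasses (famEq 𝒱)
  | d + 1 =>
      eqClasses (famEq (stageClasses R 𝒱 d ∪
        {V' | ∃ a : A, ∃ V ∈ stageClasses R 𝒱 d, V' = diaPre (R a) V}))

/-- `𝒱_ω = ⋃_d 𝒱_d`. -/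
def stageUnion {A X : Type} (R : A → X → X → Prop) (𝒱 : Set (Set X)) : Set (Set X) :=
  ⋃ d : ℕ, stageClasses R 𝒱 d

/-- `md(V) = min {d ∣ V ∈ 𝒱_d}` (as an extended natural). -/
noncomputable def mdBlock {A X : Type} (R : A → X → X → Prop) (𝒱 : Set (Set X))
    (V : Set X) : ℕ∞ :=
  ⨅ d ∈ {d : ℕ | V ∈ stageClasses R 𝒱 d}, (d : ℕ∞)

/-- `md(𝒱) = sup {md(V) ∣ V ∈ 𝒱_ω}`. -/
noncomputable def mdFam {A X : Type} (R : A → X → X → Prop) (𝒱 : Set (Set X)) : ℕ∞ :=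
  ⨆ V ∈ stageUnion R 𝒱, mdBlock R 𝒱 V

/-- The modal depth of a frame: `sup` of `md(𝒱)` over finite families `𝒱`. -/
noncomputable def mdFrame {A : Type} (F : KFrame A) : ℕ∞ :=
  ⨆ 𝒱 ∈ {𝒱 : Set (Set F.W) | 𝒱.Finite}, mdFam F.R 𝒱

/-- The modal depth of a class of frames. -/
noncomputable def mdClass {A : Type} (𝓕 : Set (KFrame A)) : ℕ∞ :=
  ⨆ F ∈ 𝓕, mdFrame F

/-- `md(L) = sup_φ min {md(ψ) ∣ φ ↔ ψ ∈ L}`. -/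
noncomputable def mdLogic {A : Type} (L : Set (MF A)) : ℕ∞ :=
  ⨆ φ : MF A, ⨅ ψ ∈ {ψ : MF A | MF.iff φ ψ ∈ L}, (ψ.depth : ℕ∞)

/-- `tra(𝓕)`: the least `m` such that every frame in `𝓕` is `m`-transitive. -/
noncomputable def traClass {A : Type} (𝓕 : Set (KFrame A)) : ℕ∞ :=
  ⨅ m ∈ {m : ℕ | ∀ F ∈ 𝓕, mTransitive (unionRel F.R) m}, (m : ℕ∞)

/-- The disjoint sum of a family of frames. -/
def disjSum {A I : Type} (F : I → KFrame A) : KFrame A where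
  W := Σ i : I, (F i).W
  R a x y := ∃ (i : I) (u v : (F i).W), x = ⟨i, u⟩ ∧ y = ⟨i, v⟩ ∧ (F i).R a u v

/-- The cluster of a point: its equivalence class under `a R* b ∧ b R* a`. -/
def clusterOf {X : Type} (R : X → X → Prop) (x : X) : Set X :=
  {y | relStar R x y ∧ relStar R y x}

/-- `clust(𝓕)`: the restrictions of frames in `𝓕` to their clusters. -/
def clustC {A : Type} (𝓕 : Set (KFrame A)) : Set (KFrame A) :=
  {G | ∃ F ∈ 𝓕, ∃ x : F.W, G = F.restrict (clusterOf (unionRel F.R) x)}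

/-! Local finiteness gives a tuned refinement: the atoms of the finite subalgebra generated by a
finite partition `𝒱`. Each atom `V` lies in the subalgebra, hence so does `R⁻¹[V]`, which is
therefore a union of atoms; this is exactly tunedness. Conversely, if `𝒰` is a finite tuned
refinement of the partition induced by finitely many generators, then the unions of blocks of `𝒰`
form a subalgebra with at most `2 ^ |𝒰|` elements containing the generators. -/

section Partitions

variable {X : Type}

theorem famEq_equivalence (𝒱 : Set (Set X)) : Equivalence (famEq 𝒱) :=
  ⟨fun _ _ _ => Iff.rfl, fun h V hV => (h V hV).symm,
    fun h₁ h₂ V hV => (h₁ V hV).trans (h₂ V hV)⟩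

theorem eqClasses_eq_classes {E : X → X → Prop} (hE : Equivalence E) :
    eqClasses E = (⟨E, hE⟩ : Setoid X).classes := by
  ext C
  refine exists_congr fun x => ?_
  rw [show {y | E x y} = {y | E y x} from Set.ext fun _ => ⟨hE.symm, hE.symm⟩]
  rfl

theorem isPartition_eqClasses {E : X → X → Prop} (hE : Equivalence E) :
    Setoid.IsPartition (eqClasses E) :=
  eqClasses_eq_classes hE ▸ Setoid.isPartition_classes _

open Classical in
theorem setOf_famEq_eq_biInter (𝒬 : Set (Set X)) (x : X) :
    {y | famEq 𝒬 x y} = ⋂ Q ∈ 𝒬, if x ∈ Q then Q else Qᶜ := by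
  ext y
  simp only [famEq, Set.mem_ofPred_eq, Set.mem_iInter]
  refine forall₂_congr fun Q _ => ?_
  by_cases hx : x ∈ Q <;> simp [hx]

theorem eqClasses_famEq_finite {𝒬 : Set (Set X)} (h𝒬 : 𝒬.Finite) :
    (eqClasses (famEq 𝒬)).Finite := by
  refine (h𝒬.powerset.image fun S => {y | ∀ Q ∈ 𝒬, y ∈ Q ↔ Q ∈ S}).subset ?_
  rintro _ ⟨x, rfl⟩
  refine ⟨{Q ∈ 𝒬 | x ∈ Q}, Set.sep_subset _ _, Set.ext fun y => ?_⟩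
  simp only [famEq, Set.mem_ofPred_eq]
  exact forall₂_congr fun Q hQ => by rw [and_iff_right hQ]; exact Iff.comm

theorem eqClasses_famEq_subset {𝒬 C : Set (Set X)} (huniv : Set.univ ∈ C)
    (hinter : ∀ U ∈ C, ∀ V ∈ C, U ∩ V ∈ C) (hcompl : ∀ U ∈ C, Uᶜ ∈ C)
    (h𝒬fin : 𝒬.Finite) (h𝒬C : 𝒬 ⊆ C) : eqClasses (famEq 𝒬) ⊆ C := by
  rintro _ ⟨x, rfl⟩
  rw [setOf_famEq_eq_biInter]
  refine InfClosed.biInf_mem (fun U hU V hV => hinter U hU V hV) h𝒬fin huniv fun Q hQ => ?_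
  split_ifs
  exacts [h𝒬C hQ, hcompl Q (h𝒬C hQ)]

theorem refines_eqClasses_famEq {𝒱 C : Set (Set X)} (h𝒱 : Setoid.IsPartition 𝒱)
    (h𝒱C : 𝒱 ⊆ C) : Refines (eqClasses (famEq C)) 𝒱 := by
  rintro _ ⟨x, rfl⟩
  obtain ⟨V, ⟨hV, hxV⟩, -⟩ := h𝒱.2 x
  exact ⟨V, hV, fun y hy => (hy V (h𝒱C hV)).1 hxV⟩

/-- The sets that are unions of blocks of `𝒰`. -/
def saturatedSets (𝒰 : Set (Set X)) : Set (Set X) :=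
  {T | ∀ U ∈ 𝒰, (U ∩ T).Nonempty → U ⊆ T}

theorem saturatedSets_subset_of_refines {𝒰 𝒱 : Set (Set X)} (h : Refines 𝒰 𝒱) :
    saturatedSets 𝒱 ⊆ saturatedSets 𝒰 := by
  rintro T hT U hU ⟨x, hxU, hxT⟩
  obtain ⟨V, hV, hUV⟩ := h U hU
  exact hUV.trans (hT V hV ⟨x, hUV hxU, hxT⟩)

theorem subset_saturatedSets_eqClasses (𝒬 : Set (Set X)) :
    𝒬 ⊆ saturatedSets (eqClasses (famEq 𝒬)) := by
  rintro Q hQ _ ⟨u, rfl⟩ ⟨x, hux, hxQ⟩ y huy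
  exact (huy Q hQ).1 ((hux Q hQ).2 hxQ)

theorem saturatedSets_finite {𝒰 : Set (Set X)} (h𝒰 : Setoid.IsPartition 𝒰)
    (h𝒰fin : 𝒰.Finite) : (saturatedSets 𝒰).Finite := by
  refine (h𝒰fin.powerset.image Set.sUnion).subset fun T hT => ?_
  refine ⟨{U ∈ 𝒰 | U ⊆ T}, Set.sep_subset _ _, Set.Subset.antisymm
    (Set.sUnion_subset fun U hU => hU.2) fun x hxT => ?_⟩
  obtain ⟨U, ⟨hU, hxU⟩, -⟩ := h𝒰.2 x
  exact ⟨U, ⟨hU, hT U hU ⟨x, hxU, hxT⟩⟩, hxU⟩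

theorem rTuned_iff_diaPre_mem_saturatedSets {R : X → X → Prop} {𝒰 : Set (Set X)} :
    RTuned R 𝒰 ↔ ∀ V ∈ 𝒰, diaPre R V ∈ saturatedSets 𝒰 :=
  ⟨fun h V hV U hU => h U hU V hV, fun h U hU V hV => h V hV U hU⟩

theorem rTuned_eqClasses_famEq {R : X → X → Prop} {C : Set (Set X)}
    (hclasses : eqClasses (famEq C) ⊆ C) (hdia : ∀ V ∈ C, diaPre R V ∈ C) :
    RTuned R (eqClasses (famEq C)) :=
  rTuned_iff_diaPre_mem_saturatedSets.2 fun V hV =>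
    subset_saturatedSets_eqClasses C (hdia V (hclasses hV))

theorem diaPre_mem_saturatedSets {R : X → X → Prop} {𝒰 : Set (Set X)} {T : Set X}
    (h𝒰 : Setoid.IsPartition 𝒰) (hR : RTuned R 𝒰) (hT : T ∈ saturatedSets 𝒰) :
    diaPre R T ∈ saturatedSets 𝒰 := by
  rintro U hU ⟨x, hxU, y, hyT, hxy⟩
  obtain ⟨V, ⟨hV, hyV⟩, -⟩ := h𝒰.2 y
  have hVT : V ⊆ T := hT V hV ⟨y, hyV, hyT⟩
  refine (rTuned_iff_diaPre_mem_saturatedSets.1 hR V hV U hU ⟨x, hxU, y, hyV, hxy⟩).trans ?_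
  rintro z ⟨b, hbV, hzb⟩
  exact ⟨b, hVT hbV, hzb⟩

theorem isSubalg_saturatedSets {A : Type} {R : A → X → X → Prop} {𝒰 : Set (Set X)}
    (h𝒰 : Setoid.IsPartition 𝒰) (hR : TunedIn R 𝒰) :
    IsSubalg (fun a => diaPre (R a)) (saturatedSets 𝒰) := by
  refine ⟨?_, fun U _ _ => Set.subset_univ U, ?_, ?_, ?_,
    fun T hT a => diaPre_mem_saturatedSets h𝒰 (hR a) hT⟩
  · rintro U - ⟨x, -, ⟨⟩⟩
  · rintro T hT T' hT' U hU ⟨x, hxU, hxT | hxT'⟩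
    · exact (hT U hU ⟨x, hxU, hxT⟩).trans Set.subset_union_left
    · exact (hT' U hU ⟨x, hxU, hxT'⟩).trans Set.subset_union_right
  · rintro T hT T' hT' U hU ⟨x, hxU, hxT, hxT'⟩
    exact Set.subset_inter (hT U hU ⟨x, hxU, hxT⟩) (hT' U hU ⟨x, hxU, hxT'⟩)
  · rintro T hT U hU ⟨x, hxU, hxT⟩ z hzU hzT
    exact hxT (hT U hU ⟨z, hzU, hzT⟩ hxU)

end Partitions

section GeneratedSubalgebra

variable {A X : Type}

theorem isSubalg_genAlg (g : A → Set X → Set X) (𝒬 : Set (Set X)) :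
    IsSubalg g (genAlg g 𝒬) := by
  simp only [genAlg, IsSubalg, Set.mem_sInter]
  refine ⟨fun C hC => hC.1.1, fun C hC => hC.1.2.1, ?_, ?_, ?_, ?_⟩
  · exact fun U hU V hV C hC => hC.1.2.2.1 U (hU C hC) V (hV C hC)
  · exact fun U hU V hV C hC => hC.1.2.2.2.1 U (hU C hC) V (hV C hC)
  · exact fun U hU C hC => hC.1.2.2.2.2.1 U (hU C hC)
  · exact fun U hU a C hC => hC.1.2.2.2.2.2 U (hU C hC) a

theorem subset_genAlg (g : A → Set X → Set X) (𝒬 : Set (Set X)) : 𝒬 ⊆ genAlg g 𝒬 :=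
  fun _ hQ => Set.mem_sInter.2 fun _ hC => hC.2 hQ

theorem genAlg_subset {g : A → Set X → Set X} {C 𝒬 : Set (Set X)} (hC : IsSubalg g C)
    (h𝒬C : 𝒬 ⊆ C) : genAlg g 𝒬 ⊆ C :=
  Set.sInter_subset_of_mem ⟨hC, h𝒬C⟩

end GeneratedSubalgebra

theorem stmt2_general {A X : Type} (R : A → X → X → Prop) (𝓟 : Set (Set X))
    (hempty : ∅ ∈ 𝓟)
    (hinter : ∀ U ∈ 𝓟, ∀ V ∈ 𝓟, U ∩ V ∈ 𝓟)
    (hcompl : ∀ U ∈ 𝓟, Uᶜ ∈ 𝓟) :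
    (∀ 𝒬 : Set (Set X), 𝒬.Finite → 𝒬 ⊆ 𝓟 →
        (genAlg (fun a => diaPre (R a)) 𝒬).Finite)
      ↔
    (∀ 𝒱 : Set (Set X), Setoid.IsPartition 𝒱 → 𝒱.Finite → 𝒱 ⊆ 𝓟 →
        ∃ 𝒰 : Set (Set X), Setoid.IsPartition 𝒰 ∧ 𝒰.Finite ∧
          Refines 𝒰 𝒱 ∧ TunedIn R 𝒰) := by
  constructor
  · intro hlf 𝒱 h𝒱 h𝒱fin h𝒱𝓟
    set C := genAlg (fun a => diaPre (R a)) 𝒱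
    have hCfin : C.Finite := hlf 𝒱 h𝒱fin h𝒱𝓟
    obtain ⟨-, hCuniv, -, hCinter, hCcompl, hCdia⟩ := isSubalg_genAlg (fun a => diaPre (R a)) 𝒱
    have hclasses : eqClasses (famEq C) ⊆ C :=
      eqClasses_famEq_subset hCuniv hCinter hCcompl hCfin subset_rfl
    exact ⟨eqClasses (famEq C), isPartition_eqClasses (famEq_equivalence C),
      eqClasses_famEq_finite hCfin, refines_eqClasses_famEq h𝒱 (subset_genAlg _ 𝒱),
      fun a => rTuned_eqClasses_famEq hclasses fun V hV => hCdia V hV a⟩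
  · intro htun 𝒬 h𝒬fin h𝒬𝓟
    have huniv : Set.univ ∈ 𝓟 := by simpa using hcompl ∅ hempty
    obtain ⟨𝒰, h𝒰, h𝒰fin, h𝒰𝒱, h𝒰tun⟩ :=
      htun (eqClasses (famEq 𝒬)) (isPartition_eqClasses (famEq_equivalence 𝒬))
        (eqClasses_famEq_finite h𝒬fin) (eqClasses_famEq_subset huniv hinter hcompl h𝒬fin h𝒬𝓟)
    have h𝒬𝒰 : 𝒬 ⊆ saturatedSets 𝒰 :=
      (subset_saturatedSets_eqClasses 𝒬).trans (saturatedSets_subset_of_refines h𝒰𝒱)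
    exact (saturatedSets_finite h𝒰 h𝒰fin).subset
      (genAlg_subset (isSubalg_saturatedSets h𝒰 h𝒰tun) h𝒬𝒰)

/-- For a general frame `(X, (R_◇)_{◇∈A}, 𝓟)`, the modal algebra on `𝓟`
is locally finite iff the general frame is tunable. -/
theorem stmt2 {A X : Type} [Fintype A] (R : A → X → X → Prop) (𝓟 : Set (Set X))
    (hempty : ∅ ∈ 𝓟)
    (hunion : ∀ U ∈ 𝓟, ∀ V ∈ 𝓟, U ∪ V ∈ 𝓟)
    (hinter : ∀ U ∈ 𝓟, ∀ V ∈ 𝓟, U ∩ V ∈ 𝓟)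
    (hcompl : ∀ U ∈ 𝓟, Uᶜ ∈ 𝓟)
    (hdia : ∀ U ∈ 𝓟, ∀ a : A, diaPre (R a) U ∈ 𝓟) :
    (∀ 𝒬 : Set (Set X), 𝒬.Finite → 𝒬 ⊆ 𝓟 →
        (genAlg (fun a => diaPre (R a)) 𝒬).Finite)
      ↔
    (∀ 𝒱 : Set (Set X), Setoid.IsPartition 𝒱 → 𝒱.Finite → 𝒱 ⊆ 𝓟 →
        ∃ 𝒰 : Set (Set X), Setoid.IsPartition 𝒰 ∧ 𝒰.Finite ∧
          Refines 𝒰 𝒱 ∧ TunedIn R 𝒰) :=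
  stmt2_general R 𝓟 hempty hinter hcompl
end

section
/- For every unimodal Kripke frame (X,R) and every m < ω: the formula R_m(◇) is valid in (X,R) if and only if (X,R) satisfies the reducible path property, i.e., for all x_0,...,x_{m+1} ∈ X with x_0 R x_1, x_1 R x_2, ..., x_m R x_{m+1}, either x_i = x_j for some i < j ≤ m+1, or x_i R x_{j+1} for some i < j ≤ m. -/
set_option maxHeartbeats 1000000

/-- Unimodal diamond. -/
def dia1 (φ : MF Unit) : MF Unit := .dia () φ

/-- `◇^i φ` (unimodal). -/
def dia1pow : ℕ → MF Unit → MF Unit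
  | 0, φ => φ
  | n + 1, φ => dia1 (dia1pow n φ)

/-- `p_i ∧ ◇(p_{i+1} ∧ ◇( … ∧ ◇ p_{i+n}) … )` (unimodal). -/
def chain1 : ℕ → ℕ → MF Unit
  | i, 0 => .var i
  | i, n + 1 => MF.and (.var i) (dia1 (chain1 (i + 1) n))

/-- The unimodal reducible-path formula `R_m(◇)`. -/
def RmU (m : ℕ) : MF Unit :=
  MF.imp (chain1 0 (m + 1))
    (MF.or
      (MF.bigOr ((pairsLT (m + 1)).map
        (fun p => dia1pow p.1 (MF.and (.var p.1) (.var p.2)))))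
      (MF.bigOr ((pairsLT m).map
        (fun p => dia1pow p.1 (MF.and (.var p.1) (dia1 (.var (p.2 + 1))))))))

/-! Unfolding the semantics, `R_m(◇)` holds at `w` iff every `R`-path `w = y₀, …, y_{m+1}`
with `yₖ ⊨ pₖ` has two indices `i < j` such that the point `yᵢ` (reached from `w` in `i`
steps) satisfies `p_j`, or sees a point satisfying `p_{j+1}`. The valuation `pₙ ↦ {xₙ}` makes
these conditions say exactly `xᵢ = x_j` and `xᵢ R x_{j+1}`. -/

section Semantics

variable {A X : Type} {R : A → X → X → Prop} {θ : ℕ → Set X} {w : X}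

theorem satM_and {φ ψ : MF A} :
    satM R θ w (MF.and φ ψ) ↔ satM R θ w φ ∧ satM R θ w ψ := by
  simp only [MF.and, MF.neg, satM]
  tauto

theorem satM_or {φ ψ : MF A} :
    satM R θ w (MF.or φ ψ) ↔ satM R θ w φ ∨ satM R θ w ψ := by
  simp only [MF.or, MF.neg, satM]
  tauto

theorem satM_bigOr_map {ι : Type} (f : ι → MF A) (l : List ι) :
    satM R θ w (MF.bigOr (l.map f)) ↔ ∃ i ∈ l, satM R θ w (f i) := by
  induction l with
  | nil => simp [MF.bigOr, satM]
  | cons i l ih => simp [MF.bigOr, satM_or, ih]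

end Semantics

theorem mem_pairsLT {n i j : ℕ} : (i, j) ∈ pairsLT n ↔ i < j ∧ j ≤ n := by
  simp only [pairsLT, List.mem_flatMap, List.mem_range, List.mem_map, Prod.mk.injEq]
  constructor
  · rintro ⟨k, hk, l, hl, rfl, rfl⟩
    omega
  · rintro ⟨hij, hj⟩
    exact ⟨j, by omega, i, hij, rfl, rfl⟩

theorem relPow_of_path {X : Type} {R : X → X → Prop} {n : ℕ} {y : ℕ → X}
    (hy : ∀ k < n, R (y k) (y (k + 1))) : relPow R n (y 0) (y n) := by
  induction n generalizing y with
  | zero => rfl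
  | succ n ih =>
    exact ⟨y 1, hy 0 n.succ_pos, ih (y := fun k => y (k + 1)) fun k hk => hy (k + 1) (by omega)⟩

section Unimodal

variable {X : Type} {R : X → X → Prop} {θ : ℕ → Set X}

theorem satM_dia1pow {φ : MF Unit} (i : ℕ) (w : X) :
    satM (fun _ => R) θ w (dia1pow i φ) ↔ ∃ v, relPow R i w v ∧ satM (fun _ => R) θ v φ := by
  induction i generalizing w with
  | zero => simp [dia1pow, relPow]
  | succ i ih =>
    simp only [dia1pow, dia1, satM, relPow, ih]
    constructor
    · rintro ⟨v, hwv, u, hvu, hu⟩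
      exact ⟨u, ⟨v, hwv, hvu⟩, hu⟩
    · rintro ⟨u, ⟨v, hwv, hvu⟩, hu⟩
      exact ⟨v, hwv, u, hvu, hu⟩

theorem satM_chain1 (i n : ℕ) (w : X) :
    satM (fun _ => R) θ w (chain1 i n) ↔
      ∃ y : ℕ → X, y 0 = w ∧ (∀ k < n, R (y k) (y (k + 1))) ∧ ∀ k ≤ n, y k ∈ θ (i + k) := by
  induction n generalizing i w with
  | zero =>
    simp only [chain1, satM]
    constructor
    · exact fun hw => ⟨fun _ => w, rfl, by omega, fun k hk => by simpa [Nat.le_zero.1 hk] using hw⟩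
    · rintro ⟨y, rfl, -, hy⟩
      exact hy 0 le_rfl
  | succ n ih =>
    simp only [chain1, satM_and, dia1, satM, ih]
    constructor
    · rintro ⟨hw, v, hwv, y, rfl, hpath, hθ⟩
      refine ⟨fun | 0 => w | k + 1 => y k, rfl, ?_, ?_⟩
      · rintro (_ | k) hk
        exacts [hwv, hpath k (by omega)]
      · rintro (_ | k) hk
        exacts [hw, by convert hθ k (by omega) using 2; omega]
    · rintro ⟨y, rfl, hpath, hθ⟩
      refine ⟨hθ 0 (Nat.zero_le _), y 1, hpath 0 n.succ_pos, fun k => y (k + 1), rfl,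
        fun k hk => hpath (k + 1) (by omega), fun k hk => ?_⟩
      convert hθ (k + 1) (by omega) using 2
      omega

theorem satM_RmU (m : ℕ) (w : X) :
    satM (fun _ => R) θ w (RmU m) ↔
      ((∃ y : ℕ → X, y 0 = w ∧ (∀ k ≤ m, R (y k) (y (k + 1))) ∧ ∀ k ≤ m + 1, y k ∈ θ k) →
        (∃ i j, i < j ∧ j ≤ m + 1 ∧ ∃ v, relPow R i w v ∧ v ∈ θ i ∧ v ∈ θ j) ∨
        (∃ i j, i < j ∧ j ≤ m ∧ ∃ v, relPow R i w v ∧ v ∈ θ i ∧ ∃ u, R v u ∧ u ∈ θ (j + 1))) := by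
  simp only [RmU, satM, satM_or, satM_bigOr_map, Prod.exists, mem_pairsLT, satM_chain1,
    satM_dia1pow, satM_and, dia1, Nat.lt_succ_iff, zero_add, and_assoc]

end Unimodal

/-- `R_m(◇)` is valid in a unimodal Kripke frame `(X, R)` iff the frame has
the reducible path property. -/
theorem stmt5 {X : Type} (R : X → X → Prop) (m : ℕ) :
    validM (fun _ : Unit => R) (RmU m) ↔
      ∀ x : ℕ → X, (∀ i ≤ m, R (x i) (x (i + 1))) →
        (∃ i j, i < j ∧ j ≤ m + 1 ∧ x i = x j) ∨
        (∃ i j, i < j ∧ j ≤ m ∧ R (x i) (x (j + 1))) := by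
  have prefix_relPow {y : ℕ → X} (hy : ∀ k ≤ m, R (y k) (y (k + 1))) {i : ℕ} (hi : i ≤ m + 1) :
      relPow R i (y 0) (y i) :=
    relPow_of_path fun k hk => hy k (by omega)
  constructor
  · intro hvalid x hx
    have hsat := (satM_RmU (θ := fun n => {x n}) m (x 0)).1 (hvalid _ _)
      ⟨x, rfl, hx, fun k _ => rfl⟩
    simp only [Set.mem_singleton_iff] at hsat
    rcases hsat with ⟨i, j, hij, hj, v, -, rfl, hv⟩ | ⟨i, j, hij, hj, v, -, rfl, u, hvu, rfl⟩
    exacts [Or.inl ⟨i, j, hij, hj, hv⟩, Or.inr ⟨i, j, hij, hj, hvu⟩]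
  · intro hpath θ w
    rw [satM_RmU]
    rintro ⟨y, rfl, hy, hθ⟩
    rcases hpath y hy with ⟨i, j, hij, hj, hyij⟩ | ⟨i, j, hij, hj, hyij⟩
    · exact Or.inl ⟨i, j, hij, hj, y i, prefix_relPow hy (by omega), hθ i (by omega),
        hyij ▸ hθ j hj⟩
    · exact Or.inr ⟨i, j, hij, hj, y i, prefix_relPow hy (by omega), hθ i (by omega),
        y (j + 1), hyij, hθ (j + 1) (by omega)⟩
end
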